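/- Let |ψ_1⟩,…,|ψ_d⟩ be unit vectors in a finite-dimensional complex Hilbert space with |⟨ψ_i|ψ_j⟩| < 1 for all i ≠ j, and let η_1,…,η_d > 0 with Σ_i η_i = 1. For each n ≥ 1 define the d×d matrix ρ^{(n)} by ρ^{(n)}_{ij} = √(η_i η_j) (⟨ψ_i|ψ_j⟩)^n (the QSD-state of the ensemble of n-fold tensor powers {|ψ_i⟩^{⊗n}, η_i}). Then every ρ^{(n)} is a density matrix, and the geometric coherence C_g(ρ^{(n)}) tends to 0 as n → ∞. -/

import Mathlib

open scoped BigOperators ComplexOrder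

noncomputable section
open scoped Classical

/-- Positive semidefinite square root of a matrix (junk value `0` if not PSD). -/
noncomputable def msqrt {d : ℕ} (A : Matrix (Fin d) (Fin d) ℂ) : Matrix (Fin d) (Fin d) ℂ :=
  if h : A.PosSemidef then (h.1.eigenvectorUnitary : Matrix (Fin d) (Fin d) ℂ) *
      Matrix.diagonal ((↑) ∘ Real.sqrt ∘ h.1.eigenvalues) *
      (star h.1.eigenvectorUnitary : Matrix (Fin d) (Fin d) ℂ) else 0

/-- A density matrix: positive semidefinite with trace one. -/
def IsDensityMatrix {d : ℕ} (ρ : Matrix (Fin d) (Fin d) ℂ) : Prop :=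
  ρ.PosSemidef ∧ ρ.trace = 1

/-- An incoherent state: a density matrix diagonal in the standard basis. -/
def IsIncoherent {d : ℕ} (σ : Matrix (Fin d) (Fin d) ℂ) : Prop :=
  IsDensityMatrix σ ∧ ∀ i j, i ≠ j → σ i j = 0

/-- Fidelity `F(ρ,σ) = (Tr √(√σ ρ √σ))²`. -/
noncomputable def fid {d : ℕ} (ρ σ : Matrix (Fin d) (Fin d) ℂ) : ℝ :=
  ((msqrt (msqrt σ * ρ * msqrt σ)).trace).re ^ 2

/-- Maximal fidelity with incoherent states. -/
noncomputable def maxFid {d : ℕ} (ρ : Matrix (Fin d) (Fin d) ℂ) : ℝ :=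
  sSup {x : ℝ | ∃ σ, IsIncoherent σ ∧ x = fid ρ σ}

/-- Geometric coherence `C_g(ρ) = 1 − F(ρ)`. -/
noncomputable def geomCoh {d : ℕ} (ρ : Matrix (Fin d) (Fin d) ℂ) : ℝ :=
  1 - maxFid ρ

/-- A POVM with `n` outcomes on a Hilbert space. -/
def IsPOVM {H : Type*} [NormedAddCommGroup H] [InnerProductSpace ℂ H] [CompleteSpace H]
    {n : ℕ} (M : Fin n → H →L[ℂ] H) : Prop :=
  (∀ i, (M i).IsPositive) ∧ (∑ i, M i) = 1

/-- Optimal success probability of ambiguous discrimination of the ensemble `{ψ i, η i}`. -/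
noncomputable def optSuccess {H : Type*} [NormedAddCommGroup H] [InnerProductSpace ℂ H]
    [CompleteSpace H] {n : ℕ} (ψ : Fin n → H) (η : Fin n → ℝ) : ℝ :=
  sSup {x : ℝ | ∃ M : Fin n → H →L[ℂ] H, IsPOVM M ∧
    x = ∑ i, η i * ((inner ℂ (ψ i) ((M i) (ψ i)) : ℂ)).re}

/-- Optimal von Neumann success probability (over orthonormal bases of `ℂ^d`). -/
noncomputable def vnSuccess {d : ℕ} (ψ : Fin d → EuclideanSpace ℂ (Fin d))
    (η : Fin d → ℝ) : ℝ :=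
  sSup {x : ℝ | ∃ f : Fin d → EuclideanSpace ℂ (Fin d), Orthonormal ℂ f ∧
    x = ∑ i, η i * ‖(inner ℂ (f i) (ψ i) : ℂ)‖ ^ 2}

/-- The column `√ρ e_i` of the square root of `ρ`, as a vector of `ℂ^d`. -/
noncomputable def sqrtCol {d : ℕ} (ρ : Matrix (Fin d) (Fin d) ℂ) (i : Fin d) :
    EuclideanSpace ℂ (Fin d) :=
  WithLp.toLp 2 (fun j => msqrt ρ j i)

/-- The state `|ψ_i⟩ = η_i^{-1/2} √ρ e_i` of the discrimination ensemble associated to `ρ`. -/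
noncomputable def discVec {d : ℕ} (ρ : Matrix (Fin d) (Fin d) ℂ) (i : Fin d) :
    EuclideanSpace ℂ (Fin d) :=
  ((Real.sqrt ((ρ i i).re) : ℂ))⁻¹ • sqrtCol ρ i

/-- The QSD-state of an ensemble: `ρ_{ij} = √(η_i η_j) ⟨ψ_i|ψ_j⟩`. -/
noncomputable def qsdState {H : Type*} [NormedAddCommGroup H] [InnerProductSpace ℂ H]
    {n : ℕ} (ψ : Fin n → H) (η : Fin n → ℝ) : Matrix (Fin n) (Fin n) ℂ :=
  fun i j => (Real.sqrt (η i * η j) : ℂ) * (inner ℂ (ψ i) (ψ j) : ℂ)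


open scoped Matrix

lemma psd_entry_mul {k : ℕ} {A B : Matrix (Fin k) (Fin k) ℂ}
    (hA : A.PosSemidef) (hB : B.PosSemidef) :
    (Matrix.of fun i j => A i j * B i j).PosSemidef := by
  exact hA.hadamard hB

lemma psd_gram {k : ℕ} {H : Type*} [NormedAddCommGroup H] [InnerProductSpace ℂ H]
    (ψ : Fin k → H) :
    (Matrix.of fun i j => (inner ℂ (ψ i) (ψ j) : ℂ)).PosSemidef := by
  exact Matrix.posSemidef_gram ℂ ψ

lemma psd_rankOne {k : ℕ} (c : Fin k → ℝ) :
    (Matrix.of fun i j => ((c i : ℂ) * (c j : ℂ))).PosSemidef := by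
  refine Matrix.posSemidef_iff_dotProduct_mulVec.mpr ⟨?_, ?_⟩
  · ext i j
    simp [Matrix.conjTranspose_apply, mul_comm]
  · intro x
    have key : dotProduct (star x) ((Matrix.of fun i j => ((c i : ℂ) * (c j : ℂ))).mulVec x)
        = star (∑ i, x i * (c i : ℂ)) * (∑ i, x i * (c i : ℂ)) := by
      simp only [dotProduct, Matrix.mulVec, Pi.star_apply, Matrix.of_apply,
        star_sum, star_mul', Complex.star_def, Complex.conj_ofReal, Finset.sum_mul,
        Finset.mul_sum]
      rw [Finset.sum_comm]
      refine Finset.sum_congr rfl fun i _ => Finset.sum_congr rfl fun j _ => by ring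
    rw [key]
    exact star_mul_self_nonneg _

open scoped MatrixOrder in
lemma msqrt_eq_cfcSqrt {d : ℕ} {A : Matrix (Fin d) (Fin d) ℂ} (hA : A.PosSemidef) :
    msqrt A = CFC.sqrt A := by
  rw [msqrt, dif_pos hA, CFC.sqrt_eq_cfc, cfc_nnreal_eq_real _ A, hA.1.cfc_eq]
  simp only [Matrix.IsHermitian.cfc]
  congr 3
  funext i
  simp [max_eq_left (hA.eigenvalues_nonneg i)]

open scoped MatrixOrder in
lemma msqrt_psd {d : ℕ} {A : Matrix (Fin d) (Fin d) ℂ} (hA : A.PosSemidef) :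
    (msqrt A).PosSemidef := by
  rw [msqrt_eq_cfcSqrt hA]; exact Matrix.nonneg_iff_posSemidef.1 (CFC.sqrt_nonneg A)

open scoped MatrixOrder in
lemma msqrt_sq {d : ℕ} {A : Matrix (Fin d) (Fin d) ℂ} (hA : A.PosSemidef) :
    (msqrt A) ^ 2 = A := by
  rw [msqrt_eq_cfcSqrt hA]; exact CFC.sq_sqrt A (Matrix.nonneg_iff_posSemidef.2 hA)

open scoped MatrixOrder in
lemma msqrt_unique {d : ℕ} {A B : Matrix (Fin d) (Fin d) ℂ} (hA : A.PosSemidef)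
    (hB : B.PosSemidef) (h : B ^ 2 = A) : msqrt A = B := by
  rw [msqrt_eq_cfcSqrt hA]
  rw [CFC.sqrt_eq_iff A B (Matrix.nonneg_iff_posSemidef.2 hA) (Matrix.nonneg_iff_posSemidef.2 hB), ← h, sq]

lemma psd_diagonal_ofReal {d : ℕ} {r : Fin d → ℝ} (hr : ∀ i, 0 ≤ r i) :
    (Matrix.diagonal fun i => (r i : ℂ)).PosSemidef :=
  Matrix.PosSemidef.diagonal fun i => Complex.zero_le_real.2 (hr i)

lemma msqrt_diagonal {d : ℕ} {r : Fin d → ℝ} (hr : ∀ i, 0 ≤ r i) :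
    msqrt (Matrix.diagonal fun i => (r i : ℂ))
      = Matrix.diagonal fun i => (Real.sqrt (r i) : ℂ) := by
  refine msqrt_unique (psd_diagonal_ofReal hr)
    (psd_diagonal_ofReal fun i => Real.sqrt_nonneg _) ?_
  rw [pow_two, Matrix.diagonal_mul_diagonal]
  have h2 : (fun i => (Real.sqrt (r i) : ℂ) * (Real.sqrt (r i) : ℂ)) = fun i => ((r i : ℝ) : ℂ) := by
    funext i; rw [← Complex.ofReal_mul, Real.mul_self_sqrt (hr i)]
  rw [h2]

lemma psd_diag_entry_nonneg {d : ℕ} {A : Matrix (Fin d) (Fin d) ℂ} (hA : A.PosSemidef)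
    (i : Fin d) : 0 ≤ A i i := by
  exact hA.diag_nonneg

lemma psd_diag_entry_eq {d : ℕ} {A : Matrix (Fin d) (Fin d) ℂ} (hA : A.PosSemidef)
    (i : Fin d) : A i i = ((A i i).re : ℂ) := by
  have h := psd_diag_entry_nonneg hA i
  rw [Complex.le_def] at h
  exact Complex.ext rfl (by simpa using h.2.symm)

lemma sq_re_msqrt_diag_le {d : ℕ} {M : Matrix (Fin d) (Fin d) ℂ} (hM : M.PosSemidef)
    (i : Fin d) : ((msqrt M i i).re) ^ 2 ≤ (M i i).re := by
  set Y := msqrt M with hY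
  have hsq : Y ^ 2 = M := msqrt_sq hM
  have hherm : Y.IsHermitian := (msqrt_psd hM).1
  have hMi : M i i = ∑ j, ((Complex.normSq (Y i j) : ℝ) : ℂ) := by
    rw [← hsq, pow_two, Matrix.mul_apply]
    refine Finset.sum_congr rfl fun j _ => ?_
    have : Y j i = star (Y i j) := by
      rw [← Matrix.conjTranspose_apply, hherm.eq]
    rw [this, Complex.star_def, Complex.mul_conj]
  have hre : (M i i).re = ∑ j, Complex.normSq (Y i j) := by
    rw [hMi]; push_cast; simp
  rw [hre]
  calc ((Y i i).re) ^ 2 ≤ Complex.normSq (Y i i) := by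
        rw [Complex.normSq_apply]; nlinarith [sq_nonneg (Y i i).im]
    _ ≤ ∑ j, Complex.normSq (Y i j) :=
        Finset.single_le_sum (fun j _ => Complex.normSq_nonneg _) (Finset.mem_univ i)

lemma fid_le_one {d : ℕ} {ρ σ : Matrix (Fin d) (Fin d) ℂ}
    (hρ : IsDensityMatrix ρ) (hσ : IsIncoherent σ) : fid ρ σ ≤ 1 := by
  obtain ⟨⟨hσpsd, hσtr⟩, hσdiag⟩ := hσ
  obtain ⟨hρpsd, hρtr⟩ := hρ
  set r : Fin d → ℝ := fun i => (σ i i).re with hrdef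
  have hr : ∀ i, 0 ≤ r i := fun i => by
    have := psd_diag_entry_nonneg hσpsd i
    rw [Complex.le_def] at this; simpa using this.1
  have hσeq : σ = Matrix.diagonal fun i => ((r i : ℝ) : ℂ) := by
    ext i j
    by_cases h : i = j
    · subst h; rw [Matrix.diagonal_apply_eq]; exact psd_diag_entry_eq hσpsd i
    · rw [Matrix.diagonal_apply_ne _ h]; exact hσdiag i j h
  have hrsum : ∑ i, r i = 1 := by
    have : σ.trace = ((∑ i, r i : ℝ) : ℂ) := by
      rw [Matrix.trace]; push_cast
      exact Finset.sum_congr rfl fun i _ => psd_diag_entry_eq hσpsd i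
    rw [hσtr] at this
    exact_mod_cast this.symm
  have hmsσ : msqrt σ = Matrix.diagonal fun i => (Real.sqrt (r i) : ℂ) := by
    rw [hσeq]; exact msqrt_diagonal hr
  set M := msqrt σ * ρ * msqrt σ with hMdef
  have hMpsd : M.PosSemidef := by
    have h1 : (msqrt σ)ᴴ = msqrt σ := (msqrt_psd hσpsd).1
    have := hρpsd.conjTranspose_mul_mul_same (msqrt σ)
    rwa [h1] at this
  -- diagonal entries of M
  have hMdiag : ∀ i, (M i i).re = r i * (ρ i i).re := by
    intro i
    rw [hMdef, hmsσ, Matrix.mul_diagonal, Matrix.diagonal_mul, psd_diag_entry_eq hρpsd i,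
      ← Complex.ofReal_mul, ← Complex.ofReal_mul, Complex.ofReal_re]
    simp only [Complex.ofReal_re]
    linear_combination (ρ i i).re * Real.mul_self_sqrt (hr i)
  have hρdiag_nonneg : ∀ i, 0 ≤ (ρ i i).re := fun i => by
    have := psd_diag_entry_nonneg hρpsd i
    rw [Complex.le_def] at this; simpa using this.1
  have hρsum : ∑ i, (ρ i i).re = 1 := by
    have h := congrArg Complex.re hρtr
    simpa [Matrix.trace, Matrix.diag, Complex.re_sum] using h
  -- bound the trace of Y = msqrt M
  set Y := msqrt M with hYdef
  have hYdiag_nonneg : ∀ i, 0 ≤ (Y i i).re := fun i => by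
    have := psd_diag_entry_nonneg (msqrt_psd hMpsd) i
    rw [Complex.le_def] at this; simpa using this.1
  have htr : (Y.trace).re = ∑ i, (Y i i).re := by
    simp [Matrix.trace, Matrix.diag, Complex.re_sum]
  have hbound : (Y.trace).re ≤ 1 := by
    rw [htr]
    have h1 : ∀ i, (Y i i).re ≤ Real.sqrt (r i) * Real.sqrt ((ρ i i).re) := by
      intro i
      have h2 := sq_re_msqrt_diag_le hMpsd i
      rw [hMdiag i] at h2
      have h3 : (Y i i).re ≤ Real.sqrt (r i * (ρ i i).re) := by
        have h4 := Real.sqrt_le_sqrt h2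
        rwa [Real.sqrt_sq (hYdiag_nonneg i)] at h4
      rwa [Real.sqrt_mul (hr i)] at h3
    calc ∑ i, (Y i i).re ≤ ∑ i, Real.sqrt (r i) * Real.sqrt ((ρ i i).re) :=
          Finset.sum_le_sum fun i _ => h1 i
      _ ≤ Real.sqrt (∑ i, r i) * Real.sqrt (∑ i, (ρ i i).re) :=
          Real.sum_sqrt_mul_sqrt_le _ hr hρdiag_nonneg
      _ = 1 := by rw [hrsum, hρsum]; simp
  have hnn : 0 ≤ (Y.trace).re := by
    rw [htr]; exact Finset.sum_nonneg fun i _ => hYdiag_nonneg i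
  rw [fid]
  nlinarith [hbound, hnn]

lemma psd_trace_re_nonneg {d : ℕ} {A : Matrix (Fin d) (Fin d) ℂ} (hA : A.PosSemidef) :
    0 ≤ (A.trace).re := by
  rw [Matrix.trace, Complex.re_sum]
  refine Finset.sum_nonneg fun i _ => ?_
  have := psd_diag_entry_nonneg hA i
  rw [Complex.le_def] at this
  simpa [Matrix.diag] using this.1

lemma key_perturb {d : ℕ} {M : Matrix (Fin d) (Fin d) ℂ} (hM : M.PosSemidef)
    {η : Fin d → ℝ} {m : ℝ} (hm : 0 < m) (hmη : ∀ i, m ≤ η i) :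
    ((msqrt M).trace.re - ∑ i, η i) ^ 2
      ≤ d * (∑ i, ∑ j, Complex.normSq
          ((M - Matrix.diagonal fun i => ((η i ^ 2 : ℝ) : ℂ)) i j)) / m ^ 2 := by
  have hη0 : ∀ i, (0:ℝ) ≤ η i := fun i => hm.le.trans (hmη i)
  set D : Matrix (Fin d) (Fin d) ℂ := Matrix.diagonal fun i => ((η i : ℝ) : ℂ) with hDdef
  have hDpsd : D.PosSemidef := psd_diagonal_ofReal hη0
  have hD2 : D ^ 2 = Matrix.diagonal fun i => ((η i ^ 2 : ℝ) : ℂ) := by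
    rw [pow_two, hDdef, Matrix.diagonal_mul_diagonal]
    congr 1; funext i; push_cast; ring
  set X : Matrix (Fin d) (Fin d) ℂ := msqrt M with hXdef
  have hXpsd : X.PosSemidef := msqrt_psd hM
  have hX2 : X ^ 2 = M := msqrt_sq hM
  set Δ : Matrix (Fin d) (Fin d) ℂ := X - D with hΔdef
  set E : Matrix (Fin d) (Fin d) ℂ := M - Matrix.diagonal fun i => ((η i ^ 2 : ℝ) : ℂ) with hEdef
  have hΔherm : Δ.IsHermitian := hXpsd.1.sub hDpsd.1
  have hΔstar : ∀ i j, Δ j i = star (Δ i j) := fun i j => by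
    rw [← Matrix.conjTranspose_apply, hΔherm.eq]
  set T : ℝ := ∑ i, ∑ j, Complex.normSq (Δ i j) with hTdef
  set e : ℝ := ∑ i, ∑ j, Complex.normSq (E i j) with hedef
  -- step 1 : (Δ*Δ).trace = T
  have step1 : (Δ * Δ).trace = ((T : ℝ) : ℂ) := by
    rw [Matrix.trace, hTdef]
    push_cast
    refine Finset.sum_congr rfl fun i _ => ?_
    rw [Matrix.diag, Matrix.mul_apply]
    refine Finset.sum_congr rfl fun j _ => ?_
    rw [hΔstar i j, Complex.star_def, Complex.mul_conj]
  -- step 2 : trace identity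
  have hE2 : E = X ^ 2 - D ^ 2 := by rw [hEdef, hX2, hD2]
  have step2 : (Δ * Δ * (X + D)).trace = (Δ * E).trace := by
    have h1 : Δ * (X + D) + (X + D) * Δ = E + E := by
      rw [hΔdef, hE2]; noncomm_ring
    have h2 : Δ * (Δ * (X + D)) + Δ * ((X + D) * Δ) = Δ * E + Δ * E := by
      rw [← mul_add, h1, mul_add]
    have h3 := congrArg Matrix.trace h2
    rw [Matrix.trace_add, Matrix.trace_add] at h3
    have h4 : (Δ * ((X + D) * Δ)).trace = (Δ * (Δ * (X + D))).trace := by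
      rw [← mul_assoc]; exact Matrix.trace_mul_comm _ _
    rw [h4] at h3
    have h5 : (Δ * (Δ * (X + D))).trace = (Δ * E).trace := by
      linear_combination h3 / 2
    rw [← mul_assoc] at h5
    exact h5
  -- step 3 : m * T ≤ re tr(Δ*Δ*(X+D))
  have step3 : m * T ≤ ((Δ * Δ * (X + D)).trace).re := by
    have hWpsd : (X + (D - Matrix.diagonal fun _ => ((m:ℝ):ℂ))).PosSemidef := by
      have : D - (Matrix.diagonal fun _ => ((m:ℝ):ℂ))
          = Matrix.diagonal fun i => ((η i - m : ℝ) : ℂ) := by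
        rw [hDdef, Matrix.diagonal_sub]
        congr 1; funext i; push_cast; ring
      rw [this]
      exact hXpsd.add (psd_diagonal_ofReal fun i => sub_nonneg.2 (hmη i))
    have hZpsd := hWpsd.conjTranspose_mul_mul_same Δ
    rw [hΔherm.eq] at hZpsd
    have hZtr := psd_trace_re_nonneg hZpsd
    have hdm : Matrix.diagonal (fun _ : Fin d => ((m:ℝ):ℂ)) = ((m:ℝ):ℂ) • (1 : Matrix (Fin d) (Fin d) ℂ) := by
      ext i j
      rcases eq_or_ne i j with h | h
      · subst h
        simp [Matrix.smul_apply, Matrix.one_apply_eq]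
      · simp [Matrix.diagonal_apply_ne _ h, Matrix.smul_apply, Matrix.one_apply_ne h]
    have hZeq : (Δ * (X + (D - Matrix.diagonal fun _ => ((m:ℝ):ℂ))) * Δ).trace
        = (Δ * Δ * (X + D)).trace - ((m:ℝ):ℂ) * ((T:ℝ):ℂ) := by
      have hsplit : Δ * (X + (D - Matrix.diagonal fun _ => ((m:ℝ):ℂ))) * Δ
          = Δ * (X + D) * Δ - ((m:ℝ):ℂ) • (Δ * Δ) := by
        rw [hdm]; noncomm_ring
      rw [hsplit, Matrix.trace_sub, Matrix.trace_smul]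
      congr 1
      · rw [Matrix.trace_mul_comm, ← mul_assoc]
      · rw [step1]; simp
    rw [hZeq] at hZtr
    rw [Complex.sub_re, ← Complex.ofReal_mul, Complex.ofReal_re] at hZtr
    linarith
  -- step 4 : 2m * re tr(Δ*E) ≤ m^2 * T + e
  have step4 : 2 * m * ((Δ * E).trace).re ≤ m ^ 2 * T + e := by
    have htrE : ((Δ * E).trace).re = ∑ i, ∑ j, (Δ i j * E j i).re := by
      rw [Matrix.trace, Complex.re_sum]
      refine Finset.sum_congr rfl fun i _ => ?_
      rw [Matrix.diag, Matrix.mul_apply, Complex.re_sum]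
    rw [htrE]
    have he' : e = ∑ i, ∑ j, Complex.normSq (E j i) := by
      rw [hedef]; exact Finset.sum_comm
    calc 2 * m * ∑ i, ∑ j, (Δ i j * E j i).re
        = ∑ i, ∑ j, 2 * m * (Δ i j * E j i).re := by
          simp only [Finset.mul_sum]
      _ ≤ ∑ i, ∑ j, (m ^ 2 * Complex.normSq (Δ i j) + Complex.normSq (E j i)) := ?_
      _ = m ^ 2 * T + e := by
          rw [hTdef, he']
          simp only [Finset.sum_add_distrib, Finset.mul_sum]
    refine Finset.sum_le_sum fun i _ => Finset.sum_le_sum fun j _ => ?_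
    have h1 : (Δ i j * E j i).re ≤ ‖Δ i j‖ * ‖E j i‖ := by
      calc (Δ i j * E j i).re ≤ ‖Δ i j * E j i‖ := Complex.re_le_norm _
        _ = ‖Δ i j‖ * ‖E j i‖ := norm_mul _ _
    have h2 : Complex.normSq (Δ i j) = ‖Δ i j‖ ^ 2 := Complex.normSq_eq_norm_sq _
    have h3 : Complex.normSq (E j i) = ‖E j i‖ ^ 2 := Complex.normSq_eq_norm_sq _
    rw [h2, h3]
    nlinarith [sq_nonneg (m * ‖Δ i j‖ - ‖E j i‖), hm,
      norm_nonneg (Δ i j), norm_nonneg (E j i), h1]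
  -- combine : T ≤ e / m^2
  have hTe : T ≤ e / m ^ 2 := by
    have h : m * T ≤ ((Δ * E).trace).re := by rw [← step2]; exact step3
    rw [le_div_iff₀ (by positivity : (0:ℝ) < m ^ 2)]
    nlinarith [step4, h, hm]
  -- step 5
  have htrΔ : ((msqrt M).trace.re - ∑ i, η i) = ∑ i, (Δ i i).re := by
    have : Δ.trace = X.trace - D.trace := Matrix.trace_sub _ _
    have hDtr : D.trace.re = ∑ i, η i := by
      rw [hDdef, Matrix.trace, Complex.re_sum]
      simp [Matrix.diag]
    have h7 : Δ.trace.re = X.trace.re - D.trace.re := by rw [this, Complex.sub_re]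
    rw [← hXdef]
    rw [show X.trace.re - ∑ i, η i = Δ.trace.re by rw [h7, hDtr]]
    rw [Matrix.trace, Complex.re_sum]
    exact Finset.sum_congr rfl fun i _ => rfl
  rw [htrΔ]
  have h8 : (∑ i, (Δ i i).re) ^ 2 ≤ (d : ℝ) * ∑ i, ((Δ i i).re) ^ 2 := by
    have := sq_sum_le_card_mul_sum_sq (s := (Finset.univ : Finset (Fin d)))
      (f := fun i => (Δ i i).re)
    simpa using this
  have h9 : ∑ i, ((Δ i i).re) ^ 2 ≤ T := by
    rw [hTdef]
    refine Finset.sum_le_sum fun i _ => ?_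
    calc ((Δ i i).re) ^ 2 ≤ Complex.normSq (Δ i i) := by
          rw [Complex.normSq_apply]; nlinarith [sq_nonneg (Δ i i).im]
      _ ≤ ∑ j, Complex.normSq (Δ i j) :=
          Finset.single_le_sum (fun j _ => Complex.normSq_nonneg _) (Finset.mem_univ i)
  calc (∑ i, (Δ i i).re) ^ 2 ≤ (d:ℝ) * ∑ i, ((Δ i i).re) ^ 2 := h8
    _ ≤ (d:ℝ) * T := by
        have : (0:ℝ) ≤ (d:ℝ) := Nat.cast_nonneg _
        nlinarith [h9]
    _ ≤ (d:ℝ) * (e / m ^ 2) := by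
        have : (0:ℝ) ≤ (d:ℝ) := Nat.cast_nonneg _
        nlinarith [hTe]
    _ = (d:ℝ) * e / m ^ 2 := by ring

/-- Multiple-copy discrimination: the QSD-states of the `n`-fold tensor power ensembles are
density matrices and their geometric coherence tends to `0`. -/
theorem geomCoh_copies_tendsto_zero {H : Type*} [NormedAddCommGroup H]
    [InnerProductSpace ℂ H] [FiniteDimensional ℂ H] {k : ℕ}
    (ψ : Fin k → H) (hψ : ∀ i, ‖ψ i‖ = 1)
    (hover : ∀ i j, i ≠ j → ‖(inner ℂ (ψ i) (ψ j) : ℂ)‖ < 1)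
    (η : Fin k → ℝ) (hη : ∀ i, 0 < η i) (hsum : ∑ i, η i = 1) :
    (∀ n : ℕ, 1 ≤ n → IsDensityMatrix (Matrix.of fun i j : Fin k =>
        (Real.sqrt (η i * η j) : ℂ) * (inner ℂ (ψ i) (ψ j) : ℂ) ^ n)) ∧
    Filter.Tendsto (fun n : ℕ => geomCoh (Matrix.of fun i j : Fin k =>
        (Real.sqrt (η i * η j) : ℂ) * (inner ℂ (ψ i) (ψ j) : ℂ) ^ n))
      Filter.atTop (nhds 0) := by
  have hknz : k ≠ 0 := by
    rintro rfl
    simp at hsum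
  haveI : Nonempty (Fin k) := ⟨⟨0, Nat.pos_of_ne_zero hknz⟩⟩
  set ρn : ℕ → Matrix (Fin k) (Fin k) ℂ := fun n => Matrix.of fun i j : Fin k =>
      (Real.sqrt (η i * η j) : ℂ) * (inner ℂ (ψ i) (ψ j) : ℂ) ^ n with hρn
  have hip_self : ∀ i, (inner ℂ (ψ i) (ψ i) : ℂ) = 1 := fun i => by
    rw [inner_self_eq_norm_sq_to_K, hψ i]
    norm_num
  -- positivity
  have hpsd : ∀ n, (ρn n).PosSemidef := by
    intro n
    induction n with
    | zero =>
        have h0 : ρn 0 = Matrix.of fun i j =>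
            ((Real.sqrt (η i) : ℂ) * (Real.sqrt (η j) : ℂ)) := by
          ext i j
          simp only [hρn, Matrix.of_apply, pow_zero, mul_one]
          rw [Real.sqrt_mul (hη i).le]
          push_cast
          ring
        rw [h0]
        exact psd_rankOne _
    | succ n ih =>
        have h1 : ρn (n+1) = Matrix.of fun i j =>
            ((ρn n) i j * (Matrix.of fun i j => (inner ℂ (ψ i) (ψ j) : ℂ)) i j) := by
          ext i j
          simp only [hρn, Matrix.of_apply, pow_succ]
          ring
        rw [h1]
        exact psd_entry_mul ih (psd_gram ψ)
  -- trace one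
  have htr : ∀ n, (ρn n).trace = 1 := by
    intro n
    rw [Matrix.trace]
    have hdiag : ∀ i, (ρn n).diag i = ((η i : ℝ) : ℂ) := fun i => by
      simp only [Matrix.diag, hρn, Matrix.of_apply, hip_self i, one_pow, mul_one]
      rw [Real.sqrt_mul_self (hη i).le]
    rw [Finset.sum_congr rfl fun i _ => hdiag i]
    rw [← Complex.ofReal_sum, hsum, Complex.ofReal_one]
  refine ⟨fun n _ => ⟨hpsd n, htr n⟩, ?_⟩
  -- the minimum weight
  set m : ℝ := Finset.univ.inf' Finset.univ_nonempty η with hmdef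
  have hm : 0 < m := by
    rw [hmdef, Finset.lt_inf'_iff]
    exact fun i _ => hη i
  have hmη : ∀ i, m ≤ η i := fun i => Finset.inf'_le _ (Finset.mem_univ i)
  -- the incoherent reference state
  set σs : Matrix (Fin k) (Fin k) ℂ := Matrix.diagonal fun i => ((η i : ℝ) : ℂ) with hσs
  have hσpsd : σs.PosSemidef := psd_diagonal_ofReal fun i => (hη i).le
  have hσtr : σs.trace = 1 := by
    rw [hσs, Matrix.trace]
    have : ∀ i, (Matrix.diagonal fun i => ((η i : ℝ) : ℂ)).diag i = ((η i : ℝ) : ℂ) :=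
      fun i => by simp [Matrix.diag]
    rw [Finset.sum_congr rfl fun i _ => this i, ← Complex.ofReal_sum, hsum,
      Complex.ofReal_one]
  have hσinc : IsIncoherent σs := ⟨⟨hσpsd, hσtr⟩, fun i j hij => Matrix.diagonal_apply_ne _ hij⟩
  have hmsσ : msqrt σs = Matrix.diagonal fun i => (Real.sqrt (η i) : ℂ) := by
    rw [hσs]
    exact msqrt_diagonal fun i => (hη i).le
  set Mn : ℕ → Matrix (Fin k) (Fin k) ℂ := fun n => msqrt σs * ρn n * msqrt σs with hMn
  have hMpsd : ∀ n, (Mn n).PosSemidef := by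
    intro n
    have h1 : (msqrt σs)ᴴ = msqrt σs := (msqrt_psd hσpsd).1
    have := (hpsd n).conjTranspose_mul_mul_same (msqrt σs)
    rwa [h1] at this
  have hMentry : ∀ n i j, Mn n i j
      = ((η i * η j : ℝ) : ℂ) * (inner ℂ (ψ i) (ψ j) : ℂ) ^ n := by
    intro n i j
    rw [hMn]
    simp only [hmsσ]
    rw [Matrix.mul_diagonal, Matrix.diagonal_mul]
    simp only [hρn, Matrix.of_apply]
    rw [Real.sqrt_mul (hη i).le,
      show ((η i * η j : ℝ) : ℂ) = ((η i : ℝ) : ℂ) * ((η j : ℝ) : ℂ) by push_cast; ring,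
      show ((η i : ℝ) : ℂ) = (Real.sqrt (η i) : ℂ) * (Real.sqrt (η i) : ℂ) by
        rw [← Complex.ofReal_mul, Real.mul_self_sqrt (hη i).le],
      show ((η j : ℝ) : ℂ) = (Real.sqrt (η j) : ℂ) * (Real.sqrt (η j) : ℂ) by
        rw [← Complex.ofReal_mul, Real.mul_self_sqrt (hη j).le]]
    push_cast
    ring
  -- the error sums
  set en : ℕ → ℝ := fun n => ∑ i, ∑ j, Complex.normSq
      ((Mn n - Matrix.diagonal fun i => ((η i ^ 2 : ℝ) : ℂ)) i j) with hen
  have hen_tendsto : Filter.Tendsto en Filter.atTop (nhds 0) := by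
    have hterm : ∀ i j : Fin k, Filter.Tendsto (fun n => Complex.normSq
        ((Mn n - Matrix.diagonal fun i => ((η i ^ 2 : ℝ) : ℂ)) i j)) Filter.atTop (nhds 0) := by
      intro i j
      rcases eq_or_ne i j with h | h
      · subst h
        have hz : ∀ n : ℕ, Complex.normSq
            ((Mn n - Matrix.diagonal fun i => ((η i ^ 2 : ℝ) : ℂ)) i i) = 0 := by
          intro n
          rw [Matrix.sub_apply, hMentry n i i, hip_self i, Matrix.diagonal_apply_eq]
          push_cast
          simp only [one_pow, mul_one]
          rw [show ((η i : ℝ):ℂ) * ((η i : ℝ):ℂ) - ((η i : ℝ):ℂ) ^ 2 = 0 by ring]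
          simp
        exact (tendsto_const_nhds (f := Filter.atTop (α := ℕ)) (x := (0:ℝ))).congr
          fun n => (hz n).symm
      · have hz : ∀ n : ℕ, Complex.normSq
            ((Mn n - Matrix.diagonal fun i => ((η i ^ 2 : ℝ) : ℂ)) i j)
            = Complex.normSq ((η i * η j : ℝ) : ℂ)
                * Complex.normSq ((inner ℂ (ψ i) (ψ j) : ℂ)) ^ n := by
          intro n
          rw [Matrix.sub_apply, hMentry n i j, Matrix.diagonal_apply_ne _ h, sub_zero,
            map_mul, map_pow]
        have hr0 : 0 ≤ Complex.normSq ((inner ℂ (ψ i) (ψ j) : ℂ)) := Complex.normSq_nonneg _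
        have hr1 : Complex.normSq ((inner ℂ (ψ i) (ψ j) : ℂ)) < 1 := by
          have h1 := hover i j h
          rw [Complex.normSq_eq_norm_sq]
          nlinarith [norm_nonneg ((inner ℂ (ψ i) (ψ j) : ℂ)), h1]
        have := (tendsto_pow_atTop_nhds_zero_of_lt_one hr0 hr1).const_mul
          (Complex.normSq ((η i * η j : ℝ) : ℂ))
        rw [mul_zero] at this
        exact this.congr fun n => (hz n).symm
    rw [show (0:ℝ) = ∑ _i : Fin k, ∑ _j : Fin k, (0:ℝ) by simp]
    exact tendsto_finset_sum (Finset.univ : Finset (Fin k))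
      (fun i _ => tendsto_finset_sum (Finset.univ : Finset (Fin k))
        (fun j _ => hterm i j))
  -- the trace of the square root converges to 1
  have hkey : ∀ n, ((msqrt (Mn n)).trace.re - 1) ^ 2 ≤ (k : ℝ) * en n / m ^ 2 := by
    intro n
    have := key_perturb (hMpsd n) hm hmη
    rwa [hsum] at this
  have hB_tendsto : Filter.Tendsto (fun n => Real.sqrt ((k : ℝ) * en n / m ^ 2))
      Filter.atTop (nhds 0) := by
    have h1 : Filter.Tendsto (fun n => (k : ℝ) * en n / m ^ 2) Filter.atTop (nhds 0) := by
      have h2 := (hen_tendsto.const_mul (k : ℝ)).div_const (m ^ 2)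
      rwa [mul_zero, zero_div] at h2
    have h2 := (Real.continuous_sqrt.tendsto 0).comp h1
    simpa [Function.comp_def] using h2
  have htrX : Filter.Tendsto (fun n => (msqrt (Mn n)).trace.re) Filter.atTop (nhds 1) := by
    have hab : ∀ n, |(msqrt (Mn n)).trace.re - 1| ≤ Real.sqrt ((k : ℝ) * en n / m ^ 2) := by
      intro n
      rw [← Real.sqrt_sq_eq_abs]
      exact Real.sqrt_le_sqrt (hkey n)
    have hlow : ∀ n, 1 - Real.sqrt ((k : ℝ) * en n / m ^ 2) ≤ (msqrt (Mn n)).trace.re := by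
      intro n; have := abs_le.1 (hab n); linarith [this.1]
    have hhigh : ∀ n, (msqrt (Mn n)).trace.re ≤ 1 + Real.sqrt ((k : ℝ) * en n / m ^ 2) := by
      intro n; have := abs_le.1 (hab n); linarith [this.2]
    have hl : Filter.Tendsto (fun n => 1 - Real.sqrt ((k : ℝ) * en n / m ^ 2))
        Filter.atTop (nhds 1) := by
      have := tendsto_const_nhds (x := (1:ℝ)) (f := Filter.atTop (α := ℕ)) |>.sub hB_tendsto
      simpa using this
    have hh : Filter.Tendsto (fun n => 1 + Real.sqrt ((k : ℝ) * en n / m ^ 2))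
        Filter.atTop (nhds 1) := by
      have := tendsto_const_nhds (x := (1:ℝ)) (f := Filter.atTop (α := ℕ)) |>.add hB_tendsto
      simpa using this
    exact tendsto_of_tendsto_of_tendsto_of_le_of_le hl hh hlow hhigh
  have hfid_eq : ∀ n, fid (ρn n) σs = ((msqrt (Mn n)).trace.re) ^ 2 := fun n => rfl
  have hfid_tendsto : Filter.Tendsto (fun n => fid (ρn n) σs) Filter.atTop (nhds 1) := by
    have := htrX.pow 2
    norm_num at this
    exact this.congr fun n => (hfid_eq n).symm
  -- squeeze the geometric coherence
  have hub : ∀ n, ∀ x ∈ {x : ℝ | ∃ σ, IsIncoherent σ ∧ x = fid (ρn n) σ}, x ≤ 1 := by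
    rintro n x ⟨σ, hσ, rfl⟩
    exact fid_le_one ⟨hpsd n, htr n⟩ hσ
  have hmem : ∀ n, fid (ρn n) σs ∈ {x : ℝ | ∃ σ, IsIncoherent σ ∧ x = fid (ρn n) σ} :=
    fun n => ⟨σs, hσinc, rfl⟩
  have hle : ∀ n, fid (ρn n) σs ≤ maxFid (ρn n) := fun n =>
    le_csSup ⟨1, fun x hx => hub n x hx⟩ (hmem n)
  have hle1 : ∀ n, maxFid (ρn n) ≤ 1 := fun n =>
    csSup_le ⟨_, hmem n⟩ (hub n)
  have h0le : ∀ n, 0 ≤ geomCoh (ρn n) := fun n => by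
    rw [geomCoh]; linarith [hle1 n]
  have hcoh_le : ∀ n, geomCoh (ρn n) ≤ 1 - fid (ρn n) σs := fun n => by
    rw [geomCoh]; linarith [hle n]
  have hgoal : Filter.Tendsto (fun n => 1 - fid (ρn n) σs) Filter.atTop (nhds 0) := by
    have := tendsto_const_nhds (x := (1:ℝ)) (f := Filter.atTop (α := ℕ)) |>.sub hfid_tendsto
    simpa using this
  exact squeeze_zero h0le hcoh_le hgoal

end
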